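/- arXiv:2307.04521 — 3 statements merged into one kernel-verified Lean document; each statement's English description precedes it below -/
import Mathlib

section
/- Let H be a complex Hilbert space and A a densely defined closed linear operator on H with domain D(A) that is bounded below: there is α > 0 with ‖Au‖ ≥ α·‖u‖ for all u ∈ D(A). Let A* denote its Hilbert-space adjoint, fix β ≥ 0, and equip D(A*) with the scaled adjoint graph norm ‖v‖²_{A*} = β²·‖v‖² + ‖A*v‖². Then for every u ∈ H with u ≠ 0 there exists v ∈ D(A*) with ‖v‖_{A*} > 0 such that |⟨u, A*v⟩| ≥ (1 + (β/α)²)^{−1/2} · ‖u‖ · ‖v‖_{A*}; in other words, the inf-sup constant of the ultraweak formulation b(u,v) = ⟨u, A*v⟩ with respect to the norm ‖·‖_{A*} is at least (1 + (β/α)²)^{−1/2}. -/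
open scoped InnerProductSpace

theorem ultraweak_exists_solution
    {H : Type*} [NormedAddCommGroup H] [InnerProductSpace ℂ H] [CompleteSpace H]
    (A : H →ₗ.[ℂ] H)
    (α : ℝ) (hα : 0 < α)
    (hbb : ∀ u : A.domain, α * ‖(u : H)‖ ≤ ‖A u‖) (u : H) :
    ∃ v : H, ‖v‖ ≤ ‖u‖ / α ∧ ∀ x : A.domain, ⟪v, A x⟫_ℂ = ⟪u, (x : H)⟫_ℂ := by
  set f : A.domain →ₗ[ℂ] H := A.toFun with hf
  have hinj : Function.Injective f := by
    intro x y hxy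
    have h0 : f (x - y) = 0 := by rw [map_sub, hxy, sub_self]
    have := hbb (x - y)
    rw [show A (x - y) = f (x - y) from rfl, h0, norm_zero] at this
    have hn : ‖((x - y : A.domain) : H)‖ = 0 := by
      nlinarith [norm_nonneg ((x - y : A.domain) : H)]
    have : ((x - y : A.domain) : H) = 0 := norm_eq_zero.mp hn
    have : (x : H) = (y : H) := by
      have := sub_eq_zero.mp this
      simpa using this
    exact Subtype.ext this
  set e := LinearEquiv.ofInjective f hinj with he
  set φ₀ : (LinearMap.range f) →ₗ[ℂ] ℂ :=
    ((innerSL ℂ u).toLinearMap.comp (A.domain.subtype)).comp e.symm.toLinearMap with hφ₀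
  have hfe : ∀ y : LinearMap.range f, f (e.symm y) = (y : H) := by
    intro y
    have : ((e (e.symm y) : LinearMap.range f) : H) = (y : H) := by
      rw [e.apply_symm_apply]
    rwa [LinearEquiv.ofInjective_apply] at this
  have hbound : ∀ y : LinearMap.range f, ‖φ₀ y‖ ≤ (‖u‖ / α) * ‖y‖ := by
    intro y
    have h1 : ‖φ₀ y‖ ≤ ‖u‖ * ‖((e.symm y : A.domain) : H)‖ := norm_inner_le_norm _ _
    have h2 : α * ‖((e.symm y : A.domain) : H)‖ ≤ ‖f (e.symm y)‖ := hbb _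
    rw [hfe y] at h2
    have h3 : ‖((e.symm y : A.domain) : H)‖ ≤ ‖(y : H)‖ / α := by
      rw [le_div_iff₀ hα]; linarith [h2]
    calc ‖φ₀ y‖ ≤ ‖u‖ * ‖((e.symm y : A.domain) : H)‖ := h1
      _ ≤ ‖u‖ * (‖(y : H)‖ / α) := by
          exact mul_le_mul_of_nonneg_left h3 (norm_nonneg u)
      _ = (‖u‖ / α) * ‖y‖ := by rw [Submodule.norm_coe]; ring
  set φ := φ₀.mkContinuous (‖u‖ / α) hbound with hφ
  obtain ⟨Φ, hext, hnorm⟩ := exists_extension_norm_eq (LinearMap.range f) φ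
  refine ⟨(InnerProductSpace.toDual ℂ H).symm Φ, ?_, ?_⟩
  · rw [LinearIsometryEquiv.norm_map, hnorm]
    exact φ₀.mkContinuous_norm_le (by positivity) hbound
  · intro x
    have h1 : ⟪(InnerProductSpace.toDual ℂ H).symm Φ, A x⟫_ℂ = Φ (A x) :=
      InnerProductSpace.toDual_symm_apply
    have h2 : A x = ((⟨f x, LinearMap.mem_range_self f x⟩ : LinearMap.range f) : H) := rfl
    rw [h1, h2, hext]
    have h3 : e.symm ⟨f x, LinearMap.mem_range_self f x⟩ = x := by
      apply hinj
      rw [hfe]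
    show φ₀ _ = _
    simp only [hφ₀, LinearMap.comp_apply, LinearEquiv.coe_toLinearMap, h3]
    rfl

/-- For a densely defined closed operator `A` on a complex Hilbert space `H`
that is bounded below by `α > 0`, the ultraweak formulation `b(u,v) = ⟪u, A† v⟫`, with the
test space `D(A†)` equipped with the scaled adjoint graph norm
`‖v‖²_{A†} = β² ‖v‖² + ‖A† v‖²` (for any `β ≥ 0`), has inf-sup constant at least
`(1 + (β/α)²)^{-1/2}`. -/
theorem ultraweak_inf_sup
    {H : Type*} [NormedAddCommGroup H] [InnerProductSpace ℂ H] [CompleteSpace H]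
    (A : H →ₗ.[ℂ] H) (hdense : Dense (A.domain : Set H)) (hclosed : A.IsClosed)
    (α : ℝ) (hα : 0 < α)
    (hbb : ∀ u : A.domain, α * ‖(u : H)‖ ≤ ‖A u‖)
    (β : ℝ) (hβ : 0 ≤ β) :
    ∀ u : H, u ≠ 0 →
      ∃ (v : H) (hv : v ∈ A.adjoint.domain),
        0 < Real.sqrt (β ^ 2 * ‖v‖ ^ 2 + ‖A.adjoint ⟨v, hv⟩‖ ^ 2) ∧
        (Real.sqrt (1 + (β / α) ^ 2))⁻¹ * ‖u‖ *
            Real.sqrt (β ^ 2 * ‖v‖ ^ 2 + ‖A.adjoint ⟨v, hv⟩‖ ^ 2)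
          ≤ ‖⟪u, A.adjoint ⟨v, hv⟩⟫_ℂ‖ := by
  intro u hu
  obtain ⟨v, hvnorm, hvinner⟩ := ultraweak_exists_solution A α hα hbb u
  have hv : v ∈ A.adjoint.domain :=
    A.mem_adjoint_domain_of_exists v ⟨u, fun x => (hvinner x).symm⟩
  have heq : A.adjoint ⟨v, hv⟩ = u :=
    LinearPMap.adjoint_apply_eq hdense ⟨v, hv⟩ (fun x => (hvinner x).symm)
  have hu0 : 0 < ‖u‖ := norm_pos_iff.mpr hu
  refine ⟨v, hv, ?_, ?_⟩
  · rw [heq]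
    apply Real.sqrt_pos.mpr
    positivity
  · rw [heq]
    have hinner : ‖⟪u, u⟫_ℂ‖ = ‖u‖ ^ 2 := by
      rw [inner_self_eq_norm_sq_to_K]
      simp [Complex.norm_real, abs_of_nonneg (norm_nonneg u)]
    rw [hinner]
    have hc : (0:ℝ) < 1 + (β / α) ^ 2 := by positivity
    have hsq : Real.sqrt (β ^ 2 * ‖v‖ ^ 2 + ‖u‖ ^ 2)
        ≤ Real.sqrt (1 + (β / α) ^ 2) * ‖u‖ := by
      have hv2 : ‖v‖ ^ 2 ≤ (‖u‖ / α) ^ 2 :=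
        pow_le_pow_left₀ (norm_nonneg v) hvnorm 2
      have h1 : β ^ 2 * ‖v‖ ^ 2 + ‖u‖ ^ 2 ≤ (1 + (β / α) ^ 2) * ‖u‖ ^ 2 := by
        have hrw : (1 + (β / α) ^ 2) * (‖u‖ ^ 2) = ‖u‖ ^ 2 + β ^ 2 * (‖u‖ / α) ^ 2 := by
          field_simp
        nlinarith
      calc Real.sqrt (β ^ 2 * ‖v‖ ^ 2 + ‖u‖ ^ 2)
          ≤ Real.sqrt ((1 + (β / α) ^ 2) * ‖u‖ ^ 2) := Real.sqrt_le_sqrt h1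
        _ = Real.sqrt (1 + (β / α) ^ 2) * ‖u‖ := by
            rw [Real.sqrt_mul hc.le, Real.sqrt_sq (norm_nonneg u)]
    have hspos : 0 < Real.sqrt (1 + (β / α) ^ 2) := Real.sqrt_pos.mpr hc
    calc (Real.sqrt (1 + (β / α) ^ 2))⁻¹ * ‖u‖ * Real.sqrt (β ^ 2 * ‖v‖ ^ 2 + ‖u‖ ^ 2)
        ≤ (Real.sqrt (1 + (β / α) ^ 2))⁻¹ * ‖u‖ * (Real.sqrt (1 + (β / α) ^ 2) * ‖u‖) := by
          apply mul_le_mul_of_nonneg_left hsq (by positivity)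
      _ = ‖u‖ ^ 2 := by field_simp
end

section
/- Let V = H¹(0,L) or V = H¹_{(0}(0,L). For every m > 0 there exists a constant C > 0 such that for all L > 0 and all real κ > 0 with L·κ ≥ m the following holds, where f is any square-integrable complex-valued function on (0,L): (a) if q₁ ∈ V satisfies a¹ᴰ_κ(q₁,w) = ∫₀ᴸ f·conj(w) dt for all w ∈ V, then ‖q₁‖_{1,κ} ≤ C·κ⁻¹·‖f‖_{L²(0,L)}; (b) if q₂ ∈ V satisfies a¹ᴰ_κ(q₂,w) = ∫₀ᴸ f·conj(w') dt for all w ∈ V, then ‖q₂‖_{1,κ} ≤ C·‖f‖_{L²(0,L)}. -/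
open MeasureTheory

/-!
Testing the variational equation with `w = q` itself gives
`Re a¹ᴰ_κ(q,q) = ‖q‖²_{1,κ} + κ |q(L)|² ≥ ‖q‖²_{1,κ}`. By Cauchy–Schwarz the right-hand side is at
most `‖f‖ ‖q‖ ≤ κ⁻¹ ‖f‖ ‖q‖_{1,κ}` in case (a) and `‖f‖ ‖q'‖ ≤ ‖f‖ ‖q‖_{1,κ}` in case (b);
dividing by `‖q‖_{1,κ}` shows that `C = 1` works.
-/

/-- A function in `H¹(0,L)`: a pair `(toFun, deriv)` where `toFun` is continuous on `[0,L]`,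
`deriv` is square-integrable on `(0,L)`, and `toFun x = toFun 0 + ∫₀ˣ deriv` on `[0,L]`. -/
structure H1 (L : ℝ) where
  toFun : ℝ → ℂ
  deriv : ℝ → ℂ
  continuousOn : ContinuousOn toFun (Set.Icc 0 L)
  memLp_deriv : MemLp deriv 2 (volume.restrict (Set.Ioo 0 L))
  eq_intderiv : ∀ x ∈ Set.Icc 0 L, toFun x = toFun 0 + ∫ t in (0:ℝ)..x, deriv t

/-- The sesquilinear form
`a¹ᴰ_κ(u,v) = ∫₀ᴸ u' conj(v') + κ² ∫₀ᴸ u conj(v) + κ u(L) conj(v(L))`. -/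
noncomputable def a1D (L : ℝ) (κ : ℂ) (u v : H1 L) : ℂ :=
  (∫ t in Set.Ioo (0:ℝ) L, u.deriv t * star (v.deriv t)) +
    κ ^ 2 * (∫ t in Set.Ioo (0:ℝ) L, u.toFun t * star (v.toFun t)) +
    κ * u.toFun L * star (v.toFun L)

/-- The weighted `H¹` norm `‖u‖²_{1,s} = ‖u'‖²_{L²(0,L)} + s² ‖u‖²_{L²(0,L)}`. -/
noncomputable def h1Norm (L : ℝ) (s : ℝ) (u : H1 L) : ℝ :=
  Real.sqrt ((∫ t in Set.Ioo (0:ℝ) L, ‖u.deriv t‖ ^ 2) +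
    s ^ 2 * ∫ t in Set.Ioo (0:ℝ) L, ‖u.toFun t‖ ^ 2)

/-- The `L²(0,L)` norm. -/
noncomputable def l2Norm (L : ℝ) (f : ℝ → ℂ) : ℝ :=
  Real.sqrt (∫ t in Set.Ioo (0:ℝ) L, ‖f t‖ ^ 2)

section L2

variable {α : Type*} [MeasurableSpace α] {μ : Measure α}

theorem integral_mul_star_self (u : α → ℂ) :
    ∫ t, u t * star (u t) ∂μ = ((∫ t, ‖u t‖ ^ 2 ∂μ : ℝ) : ℂ) := by
  rw [← integral_complex_ofReal]
  congr with t
  push_cast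
  exact Complex.mul_conj' (u t)

theorem norm_integral_mul_star_le {u v : α → ℂ} (hu : MemLp u 2 μ) (hv : MemLp v 2 μ) :
    ‖∫ t, u t * star (v t) ∂μ‖ ≤ √(∫ t, ‖u t‖ ^ 2 ∂μ) * √(∫ t, ‖v t‖ ^ 2 ∂μ) := by
  have holder := integral_mul_norm_le_Lp_mul_Lq (μ := μ) Real.HolderConjugate.two_two
    (by simpa using hu) (by simpa using hv)
  calc ‖∫ t, u t * star (v t) ∂μ‖ ≤ ∫ t, ‖u t‖ * ‖v t‖ ∂μ := by
        simpa using norm_integral_le_integral_norm (fun t => u t * star (v t))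
    _ ≤ _ := holder
    _ = _ := by simp [Real.sqrt_eq_rpow]

end L2

theorem l2Norm_nonneg (L : ℝ) (f : ℝ → ℂ) : 0 ≤ l2Norm L f := Real.sqrt_nonneg _

theorem re_integral_mul_star_le {L : ℝ} {f g : ℝ → ℂ}
    (hf : MemLp f 2 (volume.restrict (Set.Ioo 0 L)))
    (hg : MemLp g 2 (volume.restrict (Set.Ioo 0 L))) :
    (∫ t in Set.Ioo (0:ℝ) L, f t * star (g t)).re ≤ l2Norm L f * l2Norm L g :=
  (Complex.re_le_norm _).trans (norm_integral_mul_star_le hf hg)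

namespace H1

variable {L : ℝ}

theorem memLp_toFun (q : H1 L) : MemLp q.toFun 2 (volume.restrict (Set.Ioo 0 L)) := by
  have : IsFiniteMeasure (volume.restrict (Set.Ioo (0:ℝ) L)) :=
    isFiniteMeasure_restrict.2 measure_Ioo_lt_top.ne
  obtain ⟨M, hM⟩ := isCompact_Icc.exists_bound_of_continuousOn q.continuousOn
  exact MemLp.of_bound
    ((q.continuousOn.mono Set.Ioo_subset_Icc_self).aestronglyMeasurable measurableSet_Ioo) M
    ((ae_restrict_iff' measurableSet_Ioo).2
      (ae_of_all _ fun x hx => hM x (Set.Ioo_subset_Icc_self hx)))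

end H1

section Coercivity

variable {L : ℝ}

theorem h1Norm_sq (s : ℝ) (q : H1 L) :
    h1Norm L s q ^ 2 = (∫ t in Set.Ioo (0:ℝ) L, ‖q.deriv t‖ ^ 2) +
      s ^ 2 * ∫ t in Set.Ioo (0:ℝ) L, ‖q.toFun t‖ ^ 2 :=
  Real.sq_sqrt (by positivity)

theorem re_a1D_self (κ : ℝ) (q : H1 L) :
    (a1D L κ q q).re = h1Norm L κ q ^ 2 + κ * ‖q.toFun L‖ ^ 2 := by
  have boundary : (κ : ℂ) * q.toFun L * star (q.toFun L) = ((κ * ‖q.toFun L‖ ^ 2 : ℝ) : ℂ) := by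
    rw [mul_assoc, Complex.star_def, Complex.mul_conj']
    push_cast
    ring
  rw [a1D, integral_mul_star_self, integral_mul_star_self, boundary, h1Norm_sq]
  norm_cast

theorem h1Norm_le_of_re_a1D_self_le {κ c : ℝ} {q : H1 L} (hκ : 0 ≤ κ) (hc : 0 ≤ c)
    (h : (a1D L κ q q).re ≤ c * h1Norm L κ q) : h1Norm L κ q ≤ c := by
  have coercive : h1Norm L κ q ^ 2 ≤ c * h1Norm L κ q := by
    rw [re_a1D_self] at h
    nlinarith [mul_nonneg hκ (sq_nonneg ‖q.toFun L‖)]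
  have hN : 0 ≤ h1Norm L κ q := Real.sqrt_nonneg _
  nlinarith

theorem l2Norm_deriv_le_h1Norm (s : ℝ) (q : H1 L) : l2Norm L q.deriv ≤ h1Norm L s q :=
  Real.sqrt_le_sqrt (le_add_of_nonneg_right (by positivity))

theorem l2Norm_toFun_le_inv_mul_h1Norm {κ : ℝ} (hκ : 0 < κ) (q : H1 L) :
    l2Norm L q.toFun ≤ κ⁻¹ * h1Norm L κ q := by
  rw [le_inv_mul_iff₀ hκ, h1Norm]
  refine Real.le_sqrt_of_sq_le ?_
  rw [mul_pow, l2Norm, Real.sq_sqrt (integral_nonneg fun _ => sq_nonneg _)]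
  exact le_add_of_nonneg_left (integral_nonneg fun _ => sq_nonneg _)

end Coercivity

theorem stability_a1D_real_general (zeroBC : Bool) (m : ℝ) :
    ∃ C : ℝ, 0 < C ∧
      ∀ L : ℝ, 0 < L → ∀ κ : ℝ, 0 < κ → m ≤ L * κ →
        ∀ f : ℝ → ℂ, MemLp f 2 (volume.restrict (Set.Ioo (0:ℝ) L)) →
          (∀ q₁ : H1 L, (zeroBC = true → q₁.toFun 0 = 0) →
            (∀ w : H1 L, (zeroBC = true → w.toFun 0 = 0) →
              a1D L (κ : ℂ) q₁ w = ∫ t in Set.Ioo (0:ℝ) L, f t * star (w.toFun t)) →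
            h1Norm L κ q₁ ≤ C * κ⁻¹ * l2Norm L f) ∧
          (∀ q₂ : H1 L, (zeroBC = true → q₂.toFun 0 = 0) →
            (∀ w : H1 L, (zeroBC = true → w.toFun 0 = 0) →
              a1D L (κ : ℂ) q₂ w = ∫ t in Set.Ioo (0:ℝ) L, f t * star (w.deriv t)) →
            h1Norm L κ q₂ ≤ C * l2Norm L f) := by
  refine ⟨1, one_pos, fun L _ κ hκ _ f hf => ⟨fun q hq0 heq => ?_, fun q hq0 heq => ?_⟩⟩
  · rw [one_mul]
    refine h1Norm_le_of_re_a1D_self_le hκ.le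
      (mul_nonneg (inv_nonneg.2 hκ.le) (l2Norm_nonneg L f)) ?_
    calc (a1D L κ q q).re = (∫ t in Set.Ioo (0:ℝ) L, f t * star (q.toFun t)).re := by
          rw [heq q hq0]
      _ ≤ l2Norm L f * l2Norm L q.toFun := re_integral_mul_star_le hf q.memLp_toFun
      _ ≤ l2Norm L f * (κ⁻¹ * h1Norm L κ q) :=
          mul_le_mul_of_nonneg_left (l2Norm_toFun_le_inv_mul_h1Norm hκ q) (l2Norm_nonneg L f)
      _ = κ⁻¹ * l2Norm L f * h1Norm L κ q := by ring
  · rw [one_mul]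
    refine h1Norm_le_of_re_a1D_self_le hκ.le (l2Norm_nonneg L f) ?_
    calc (a1D L κ q q).re = (∫ t in Set.Ioo (0:ℝ) L, f t * star (q.deriv t)).re := by
          rw [heq q hq0]
      _ ≤ l2Norm L f * l2Norm L q.deriv := re_integral_mul_star_le hf q.memLp_deriv
      _ ≤ l2Norm L f * h1Norm L κ q :=
          mul_le_mul_of_nonneg_left (l2Norm_deriv_le_h1Norm κ q) (l2Norm_nonneg L f)

/-- For `V = H¹(0,L)` (`zeroBC = false`) or `V = H¹_{(0}(0,L)`
(`zeroBC = true`) and every `m > 0` there is `C > 0` such that for all `L > 0` and all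
real `κ > 0` with `L κ ≥ m`:
(a) a solution `q₁ ∈ V` of `a¹ᴰ_κ(q₁,w) = (f,w)` for all `w ∈ V` satisfies
`‖q₁‖_{1,κ} ≤ C κ⁻¹ ‖f‖`;
(b) a solution `q₂ ∈ V` of `a¹ᴰ_κ(q₂,w) = (f,w')` for all `w ∈ V` satisfies
`‖q₂‖_{1,κ} ≤ C ‖f‖`. -/
theorem stability_a1D_real (zeroBC : Bool) (m : ℝ) (hm : 0 < m) :
    ∃ C : ℝ, 0 < C ∧
      ∀ L : ℝ, 0 < L → ∀ κ : ℝ, 0 < κ → m ≤ L * κ →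
        ∀ f : ℝ → ℂ, MemLp f 2 (volume.restrict (Set.Ioo (0:ℝ) L)) →
          (∀ q₁ : H1 L, (zeroBC = true → q₁.toFun 0 = 0) →
            (∀ w : H1 L, (zeroBC = true → w.toFun 0 = 0) →
              a1D L (κ : ℂ) q₁ w = ∫ t in Set.Ioo (0:ℝ) L, f t * star (w.toFun t)) →
            h1Norm L κ q₁ ≤ C * κ⁻¹ * l2Norm L f) ∧
          (∀ q₂ : H1 L, (zeroBC = true → q₂.toFun 0 = 0) →
            (∀ w : H1 L, (zeroBC = true → w.toFun 0 = 0) →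
              a1D L (κ : ℂ) q₂ w = ∫ t in Set.Ioo (0:ℝ) L, f t * star (w.deriv t)) →
            h1Norm L κ q₂ ≤ C * l2Norm L f) :=
  stability_a1D_real_general zeroBC m
end

section
/- Suppose α, δ, ζ solve the first-order ODE system α' − iωδ = f₁, α − iω·μ⁻¹·ζ = f₃, −δ' + ζ + iωα = g₁ almost everywhere on (0,L), with boundary conditions α(0) = 0 and iω·δ(L) = −μ̃·α(L). Then α satisfies the weak second-order formulation: for every H¹(0,L) function v with v(0) = 0, ∫₀ᴸ α'·conj(v') dt + (μ − ω²)·∫₀ᴸ α·conj(v) dt + μ̃·α(L)·conj(v(L)) = ∫₀ᴸ f₁·conj(v') dt + iω·∫₀ᴸ g₁·conj(v) dt + μ·∫₀ᴸ f₃·conj(v) dt. -/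
open MeasureTheory

open Set

/-!
Test the three equations against `conj v'`, `iω conj v` and `μ conj v` and add them: the `ζ`
terms cancel and the `δ` terms combine to `-iω ∫ (δ' conj v + δ conj v')`, which integration by
parts turns into `-iω δ(L) conj v(L)` because `v(0) = 0`; the boundary condition at `L` rewrites
this as `μ̃ α(L) conj v(L)`.

Integration by parts needs no differentiability, only the representation of `δ`, `v` as
primitives: if `F, G` are the primitives of `f, g` vanishing at `0`, Fubini on `(0,L)²`, split along
the diagonal, gives `∫ f G + ∫ F g = (∫ f)(∫ g)`.
-/

variable {𝕜 : Type*} [RCLike 𝕜]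

theorem integral_mul_setIntegral_Iio_add_setIntegral_Iic_mul {ν : Measure ℝ} [SFinite ν]
    {g h : ℝ → 𝕜} (hg : Integrable g ν) (hh : Integrable h ν) :
    (∫ x, g x * (∫ y in Iio x, h y ∂ν) ∂ν) + ∫ y, (∫ x in Iic y, g x ∂ν) * h y ∂ν
      = (∫ x, g x ∂ν) * ∫ y, h y ∂ν := by
  set F : ℝ × ℝ → 𝕜 := fun p => g p.1 * h p.2
  have hF : Integrable F (ν.prod ν) := hg.mul_prod hh
  have hS : MeasurableSet {p : ℝ × ℝ | p.2 < p.1} :=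
    measurableSet_lt measurable_snd measurable_fst
  have below : ∫ p in {p : ℝ × ℝ | p.2 < p.1}, F p ∂(ν.prod ν)
      = ∫ x, g x * (∫ y in Iio x, h y ∂ν) ∂ν := by
    rw [← integral_indicator hS, integral_prod _ (hF.indicator hS)]
    congr with x
    rw [← integral_const_mul, ← integral_indicator measurableSet_Iio]
    congr with y
  have above : ∫ p in {p : ℝ × ℝ | p.2 < p.1}ᶜ, F p ∂(ν.prod ν)
      = ∫ y, (∫ x in Iic y, g x ∂ν) * h y ∂ν := by
    rw [← integral_indicator hS.compl, integral_prod_symm _ (hF.indicator hS.compl)]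
    congr with y
    rw [← integral_mul_const, ← integral_indicator measurableSet_Iic]
    congr with x
    by_cases hxy : x ≤ y <;> simp [F, hxy]
  rw [← below, ← above, integral_add_compl hS hF]
  exact integral_prod_mul g h

theorem MeasureTheory.MemLp.integrable_mul_star {α : Type*} {m : MeasurableSpace α}
    {μ : Measure α} {f g : α → 𝕜} (hf : MemLp f 2 μ) (hg : MemLp g 2 μ) :
    Integrable (fun t => f t * star (g t)) μ :=
  hf.integrable_mul hg.star

section Primitive

variable {a b : ℝ} {f F : ℝ → 𝕜}

theorem continuousOn_Icc_of_eq_add_integral (hab : a ≤ b) (hf : IntegrableOn f (Ioo a b))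
    (hF : ∀ x ∈ Icc a b, F x = F a + ∫ t in a..x, f t) : ContinuousOn F (Icc a b) := by
  have hf' : IntegrableOn f (uIcc a b) := by
    rwa [uIcc_of_le hab, integrableOn_Icc_iff_integrableOn_Ioo]
  have hprim := intervalIntegral.continuousOn_primitive_interval hf'
  rw [uIcc_of_le hab] at hprim
  exact (continuousOn_const.add hprim).congr hF

theorem setIntegral_Ioo_eq_sub_of_eq_add_integral (hab : a ≤ b)
    (hF : ∀ x ∈ Icc a b, F x = F a + ∫ t in a..x, f t) : ∫ t in Ioo a b, f t = F b - F a := by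
  rw [hF b ⟨hab, le_rfl⟩, intervalIntegral.integral_of_le hab, integral_Ioc_eq_integral_Ioo]
  ring

theorem integral_mul_add_integral_mul_eq_sub_of_eq_add_integral {g G : ℝ → 𝕜} (hab : a ≤ b)
    (hf : IntegrableOn f (Ioo a b)) (hg : IntegrableOn g (Ioo a b))
    (hF : ∀ x ∈ Icc a b, F x = F a + ∫ t in a..x, f t)
    (hG : ∀ x ∈ Icc a b, G x = G a + ∫ t in a..x, g t) :
    (∫ t in Ioo a b, f t * G t) + (∫ t in Ioo a b, F t * g t) = F b * G b - F a * G a := by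
  have hfG : IntegrableOn (fun t => f t * G t) (Ioo a b) :=
    hf.mul_continuousOn_of_subset (continuousOn_Icc_of_eq_add_integral hab hg hG)
      measurableSet_Ioo isCompact_Icc Ioo_subset_Icc_self
  have hFg : IntegrableOn (fun t => F t * g t) (Ioo a b) :=
    hg.continuousOn_mul_of_subset (continuousOn_Icc_of_eq_add_integral hab hf hF)
      isCompact_Icc measurableSet_Ioo Ioo_subset_Icc_self
  have hIio : ∀ t ∈ Ioo a b, ∫ y in Iio t, g y ∂(volume.restrict (Ioo a b)) = G t - G a := by
    intro t ht
    rw [Measure.restrict_restrict measurableSet_Iio, Iio_inter_Ioo, min_eq_left ht.2.le,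
      ← setIntegral_Ioo_eq_sub_of_eq_add_integral ht.1.le
        fun x hx => hG x ⟨hx.1, hx.2.trans ht.2.le⟩]
  have hIic : ∀ t ∈ Ioo a b, ∫ x in Iic t, f x ∂(volume.restrict (Ioo a b)) = F t - F a := by
    intro t ht
    have hIoc : Iic t ∩ Ioo a b = Ioc a t := by
      ext x
      simp only [mem_inter_iff, mem_Iic, mem_Ioo, mem_Ioc]
      grind
    rw [Measure.restrict_restrict measurableSet_Iic, hIoc,
      integral_Ioc_eq_integral_Ioo,
      ← setIntegral_Ioo_eq_sub_of_eq_add_integral ht.1.le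
        fun x hx => hF x ⟨hx.1, hx.2.trans ht.2.le⟩]
  have below : ∫ t in Ioo a b, f t * ∫ y in Iio t, g y ∂(volume.restrict (Ioo a b))
      = (∫ t in Ioo a b, f t * G t) - (∫ t in Ioo a b, f t) * G a := by
    rw [← integral_mul_const, ← integral_sub hfG (hf.mul_const _)]
    exact setIntegral_congr_fun measurableSet_Ioo fun t ht => by rw [hIio t ht, mul_sub]
  have above : ∫ t in Ioo a b, (∫ x in Iic t, f x ∂(volume.restrict (Ioo a b))) * g t
      = (∫ t in Ioo a b, F t * g t) - F a * ∫ t in Ioo a b, g t := by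
    rw [← integral_const_mul, ← integral_sub hFg (hg.const_mul _)]
    exact setIntegral_congr_fun measurableSet_Ioo fun t ht => by rw [hIic t ht, sub_mul]
  have key := integral_mul_setIntegral_Iio_add_setIntegral_Iic_mul hf hg
  rw [below, above, setIntegral_Ioo_eq_sub_of_eq_add_integral hab hF,
    setIntegral_Ioo_eq_sub_of_eq_add_integral hab hG] at key
  linear_combination key

end Primitive

namespace H1

variable {L : ℝ}

theorem memLp_toFun_s14 (u : H1 L) : MemLp u.toFun 2 (volume.restrict (Ioo 0 L)) := by
  obtain ⟨C, hC⟩ := isCompact_Icc.exists_bound_of_continuousOn u.continuousOn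
  refine (memLp_top_of_bound ?_ C ?_).mono_exponent le_top
  · exact (u.continuousOn.mono Ioo_subset_Icc_self).aestronglyMeasurable measurableSet_Ioo
  · exact ae_restrict_of_forall_mem measurableSet_Ioo fun x hx =>
      hC x (Ioo_subset_Icc_self hx)

theorem integral_deriv_mul_star_add_integral_mul_star_deriv (hL : 0 ≤ L) (u v : H1 L) :
    (∫ t in Ioo 0 L, u.deriv t * star (v.toFun t)) +
        (∫ t in Ioo 0 L, u.toFun t * star (v.deriv t))
      = u.toFun L * star (v.toFun L) - u.toFun 0 * star (v.toFun 0) := by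
  refine integral_mul_add_integral_mul_eq_sub_of_eq_add_integral hL
    (u.memLp_deriv.integrable one_le_two) (v.memLp_deriv.star.integrable one_le_two)
    u.eq_intderiv fun x hx => ?_
  rw [v.eq_intderiv x hx, star_add]
  exact congrArg _ intervalIntegral.intervalIntegral_conj.symm

end H1

theorem weak_form_alpha_general (L ω μ : ℝ) (hL : 0 < L) (hμ : 0 < μ)
    (f₁ f₃ g₁ : ℝ → ℂ)
    (α δ : H1 L) (ζ : ℝ → ℂ) (hζ : MemLp ζ 2 (volume.restrict (Set.Ioo (0:ℝ) L)))
    (hode : ∀ᵐ t ∂(volume.restrict (Set.Ioo (0:ℝ) L)),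
      α.deriv t - Complex.I * ω * δ.toFun t = f₁ t ∧
      α.toFun t - Complex.I * ω * (μ : ℂ)⁻¹ * ζ t = f₃ t ∧
      -δ.deriv t + ζ t + Complex.I * ω * α.toFun t = g₁ t)
    (hbcL : Complex.I * ω * δ.toFun L
        = -(((μ : ℂ) - (ω : ℂ) ^ 2) ^ ((1 : ℂ) / 2)) * α.toFun L) :
    ∀ v : H1 L, v.toFun 0 = 0 →
      (∫ t in Set.Ioo (0:ℝ) L, α.deriv t * star (v.deriv t)) +
        ((μ : ℂ) - (ω : ℂ) ^ 2) * (∫ t in Set.Ioo (0:ℝ) L, α.toFun t * star (v.toFun t)) +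
        (((μ : ℂ) - (ω : ℂ) ^ 2) ^ ((1 : ℂ) / 2)) * α.toFun L * star (v.toFun L)
      = (∫ t in Set.Ioo (0:ℝ) L, f₁ t * star (v.deriv t)) +
        Complex.I * ω * (∫ t in Set.Ioo (0:ℝ) L, g₁ t * star (v.toFun t)) +
        (μ : ℂ) * ∫ t in Set.Ioo (0:ℝ) L, f₃ t * star (v.toFun t) := by
  intro v hv0
  have hv := v.memLp_toFun_s14
  have hv' := v.memLp_deriv
  have hf₁ : (∫ t in Ioo 0 L, f₁ t * star (v.deriv t))
      = (∫ t in Ioo 0 L, α.deriv t * star (v.deriv t))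
        - Complex.I * ω * ∫ t in Ioo 0 L, δ.toFun t * star (v.deriv t) := by
    rw [← integral_const_mul, ← integral_sub (α.memLp_deriv.integrable_mul_star hv')
      ((δ.memLp_toFun_s14.integrable_mul_star hv').const_mul _)]
    exact integral_congr_ae (hode.mono fun t ht => by beta_reduce; rw [← ht.1]; ring)
  have hf₃ : (∫ t in Ioo 0 L, f₃ t * star (v.toFun t))
      = (∫ t in Ioo 0 L, α.toFun t * star (v.toFun t))
        - Complex.I * ω * (μ : ℂ)⁻¹ * ∫ t in Ioo 0 L, ζ t * star (v.toFun t) := by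
    rw [← integral_const_mul, ← integral_sub (α.memLp_toFun_s14.integrable_mul_star hv)
      ((hζ.integrable_mul_star hv).const_mul _)]
    exact integral_congr_ae (hode.mono fun t ht => by beta_reduce; rw [← ht.2.1]; ring)
  have hg₁ : (∫ t in Ioo 0 L, g₁ t * star (v.toFun t))
      = -(∫ t in Ioo 0 L, δ.deriv t * star (v.toFun t)) + (∫ t in Ioo 0 L, ζ t * star (v.toFun t))
        + Complex.I * ω * ∫ t in Ioo 0 L, α.toFun t * star (v.toFun t) := by
    have hδ' := (δ.memLp_deriv.integrable_mul_star hv).fun_neg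
    have hζ' := hζ.integrable_mul_star hv
    rw [← integral_const_mul, ← integral_neg, ← integral_add hδ' hζ', ← integral_add
      (hδ'.fun_add hζ') ((α.memLp_toFun_s14.integrable_mul_star hv).const_mul _)]
    exact integral_congr_ae (hode.mono fun t ht => by beta_reduce; rw [← ht.2.2]; ring)
  have hibp := δ.integral_deriv_mul_star_add_integral_mul_star_deriv hL.le v
  rw [hv0, star_zero, mul_zero, sub_zero] at hibp
  have hμ0 : (μ : ℂ) ≠ 0 := by exact_mod_cast hμ.ne'
  rw [hf₁, hg₁, hf₃]
  linear_combination (Complex.I * ω) * hibp + star (v.toFun L) * hbcL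
    - ω ^ 2 * (∫ t in Ioo 0 L, α.toFun t * star (v.toFun t)) * Complex.I_sq
    + Complex.I * ω * (∫ t in Ioo 0 L, ζ t * star (v.toFun t)) * mul_inv_cancel₀ hμ0

/-- If `(α, δ, ζ)` solves `α' - iωδ = f₁`, `α - iω μ⁻¹ ζ = f₃`,
`-δ' + ζ + iωα = g₁` a.e. on `(0,L)` with `α(0) = 0` and `iω δ(L) = -μ̃ α(L)`, where
`μ̃ = (μ - ω²)^{1/2}` is the principal square root, then `α` satisfies the weak second-order
formulation: for all `v ∈ H¹(0,L)` with `v(0) = 0`,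
`(α',v') + (μ-ω²)(α,v) + μ̃ α(L) conj(v(L)) = (f₁,v') + iω (g₁,v) + μ (f₃,v)`. -/
theorem weak_form_alpha (L ω μ : ℝ) (hL : 0 < L) (hω : 0 < ω) (hμ : 0 < μ)
    (hne : μ ≠ ω ^ 2)
    (f₁ f₃ g₁ : ℝ → ℂ)
    (hf₁ : MemLp f₁ 2 (volume.restrict (Set.Ioo (0:ℝ) L)))
    (hf₃ : MemLp f₃ 2 (volume.restrict (Set.Ioo (0:ℝ) L)))
    (hg₁ : MemLp g₁ 2 (volume.restrict (Set.Ioo (0:ℝ) L)))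
    (α δ : H1 L) (ζ : ℝ → ℂ) (hζ : MemLp ζ 2 (volume.restrict (Set.Ioo (0:ℝ) L)))
    (hode : ∀ᵐ t ∂(volume.restrict (Set.Ioo (0:ℝ) L)),
      α.deriv t - Complex.I * ω * δ.toFun t = f₁ t ∧
      α.toFun t - Complex.I * ω * (μ : ℂ)⁻¹ * ζ t = f₃ t ∧
      -δ.deriv t + ζ t + Complex.I * ω * α.toFun t = g₁ t)
    (hbc0 : α.toFun 0 = 0)
    (hbcL : Complex.I * ω * δ.toFun L
        = -(((μ : ℂ) - (ω : ℂ) ^ 2) ^ ((1 : ℂ) / 2)) * α.toFun L) :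
    ∀ v : H1 L, v.toFun 0 = 0 →
      (∫ t in Set.Ioo (0:ℝ) L, α.deriv t * star (v.deriv t)) +
        ((μ : ℂ) - (ω : ℂ) ^ 2) * (∫ t in Set.Ioo (0:ℝ) L, α.toFun t * star (v.toFun t)) +
        (((μ : ℂ) - (ω : ℂ) ^ 2) ^ ((1 : ℂ) / 2)) * α.toFun L * star (v.toFun L)
      = (∫ t in Set.Ioo (0:ℝ) L, f₁ t * star (v.deriv t)) +
        Complex.I * ω * (∫ t in Set.Ioo (0:ℝ) L, g₁ t * star (v.toFun t)) +
        (μ : ℂ) * ∫ t in Set.Ioo (0:ℝ) L, f₃ t * star (v.toFun t) :=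
  weak_form_alpha_general L ω μ hL hμ f₁ f₃ g₁ α δ ζ hζ hode hbcL
end
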